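/- For any two fundamental elements p, q of the near-regular partial field 𝕌₁ with p, q ∉ {0, 1}, there exists an automorphism of 𝕌₁ taking p to q. -/

import Mathlib

/-- The transcendental element `α` of `ℚ(α)`. -/
noncomputable def nrAlpha : RatFunc ℚ := RatFunc.X

/-- The near-regular partial field `𝕌₁`, viewed as the subset
`⟨-1, α, 1-α⟩ ∪ {0}` of `ℚ(α)`. -/
def U1 : Set (RatFunc ℚ) :=
  {x | x = 0 ∨ ∃ (ε : RatFunc ℚ) (i j : ℤ),
    (ε = 1 ∨ ε = -1) ∧ x = ε * nrAlpha ^ i * (1 - nrAlpha) ^ j}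

/-- `p` is a fundamental element of `𝕌₁` if `p ∈ 𝕌₁` and `1 - p ∈ 𝕌₁`. -/
def IsFund (p : RatFunc ℚ) : Prop := p ∈ U1 ∧ (1 - p) ∈ U1

/-- An automorphism of the partial field `𝕌₁`: a bijection of `𝕌₁` fixing `1`,
preserving products, preserving defined sums, and reflecting definedness of sums. -/
structure U1Auto where
  toFun : RatFunc ℚ → RatFunc ℚ
  bijOn : Set.BijOn toFun U1 U1
  map_one : toFun 1 = 1
  map_mul : ∀ p ∈ U1, ∀ q ∈ U1, toFun (p * q) = toFun p * toFun q
  map_add : ∀ p ∈ U1, ∀ q ∈ U1, p + q ∈ U1 → toFun (p + q) = toFun p + toFun q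
  defined_iff : ∀ p ∈ U1, ∀ q ∈ U1, (p + q ∈ U1 ↔ toFun p + toFun q ∈ U1)

/-! The substitutions `α ↦ 1 - α` and `α ↦ α⁻¹` are ring automorphisms of `ℚ(α)` preserving `𝕌₁`;
the group they generate moves `α` to each of the six fundamental elements other than `0, 1`.
So it suffices to show that there are no further fundamental elements. If
`ε α^i (1-α)^j + ε' α^k (1-α)^l = 1`, specialising `α` to `2`, `-1` and `1/2` gives three equations
of the shape `±2^x ± 2^y = 1`; comparing `2`-adic valuations, each has only three solutions, and
together they leave exactly the six expected values of `(ε, i, j)`. -/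

open Polynomial Pointwise MulAction

local notation "K" => RatFunc ℚ

lemma nrAlpha_ne_zero : (nrAlpha : K) ≠ 0 := RatFunc.X_ne_zero

lemma one_sub_nrAlpha_ne_zero : 1 - (nrAlpha : K) ≠ 0 := by
  have h : (1 - X : ℚ[X]) ≠ 0 := fun h => by simpa using congrArg (eval 0) h
  simpa [nrAlpha] using RatFunc.algebraMap_ne_zero h

lemma transcendental_nrAlpha : Transcendental ℚ (nrAlpha : K) :=
  (transcendental_algebraMap_iff (RatFunc.algebraMap_injective ℚ)).mpr (transcendental_X ℚ)

lemma transcendental_one_sub_nrAlpha : Transcendental ℚ (1 - nrAlpha : K) :=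
  fun h => transcendental_nrAlpha (by simpa using isAlgebraic_one.sub h)

lemma transcendental_nrAlpha_inv : Transcendental ℚ (nrAlpha⁻¹ : K) :=
  fun h => transcendental_nrAlpha (IsAlgebraic.inv_iff.mp h)

namespace U1

lemma sign_mul_mem {ε : K} (hε : ε = 1 ∨ ε = -1) (i j : ℤ) :
    ε * nrAlpha ^ i * (1 - nrAlpha) ^ j ∈ U1 :=
  Or.inr ⟨ε, i, j, hε, rfl⟩

lemma one_mem : (1 : K) ∈ U1 := by simpa using sign_mul_mem (.inl rfl) 0 0

lemma neg_one_mem : (-1 : K) ∈ U1 := by simpa using sign_mul_mem (.inr rfl) 0 0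

lemma nrAlpha_mem : nrAlpha ∈ U1 := by simpa using sign_mul_mem (.inl rfl) 1 0

lemma one_sub_nrAlpha_mem : 1 - nrAlpha ∈ U1 := by simpa using sign_mul_mem (.inl rfl) 0 1

lemma mul_mem {x y : K} (hx : x ∈ U1) (hy : y ∈ U1) : x * y ∈ U1 := by
  rcases hx with rfl | ⟨ε, i, j, hε, rfl⟩
  · exact Or.inl (zero_mul y)
  rcases hy with rfl | ⟨ε', k, l, hε', rfl⟩
  · exact Or.inl (mul_zero _)
  have hεε' : ε * ε' = 1 ∨ ε * ε' = -1 := by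
    rcases hε with rfl | rfl <;> rcases hε' with rfl | rfl <;> norm_num
  convert sign_mul_mem hεε' (i + k) (j + l) using 1
  rw [zpow_add₀ nrAlpha_ne_zero, zpow_add₀ one_sub_nrAlpha_ne_zero]
  ring

lemma zpow_mem {x : K} (hx : x ∈ U1) (n : ℤ) : x ^ n ∈ U1 := by
  rcases hx with rfl | ⟨ε, i, j, hε, rfl⟩
  · rcases eq_or_ne n 0 with rfl | hn
    · simpa using one_mem
    · exact Or.inl (zero_zpow n hn)
  have hεn : ε ^ n = 1 ∨ ε ^ n = -1 := by
    rcases hε with rfl | rfl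
    · simp
    · rcases Int.even_or_odd n with h | h
      exacts [.inl h.neg_one_zpow, .inr h.neg_one_zpow]
  convert sign_mul_mem hεn (i * n) (j * n) using 1
  rw [mul_zpow, mul_zpow, zpow_mul, zpow_mul]

end U1

lemma isFund_one_sub_nrAlpha : IsFund (1 - nrAlpha) :=
  ⟨U1.one_sub_nrAlpha_mem, by simpa using U1.nrAlpha_mem⟩

lemma isFund_nrAlpha_inv : IsFund nrAlpha⁻¹ := by
  refine ⟨by simpa using U1.zpow_mem U1.nrAlpha_mem (-1), ?_⟩
  convert U1.sign_mul_mem (.inr rfl) (-1) 1 using 1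
  field_simp [nrAlpha_ne_zero]
  ring

lemma mapsTo_U1_of_isFund {f : K →+* K} (hf : IsFund (f nrAlpha)) : Set.MapsTo f U1 U1 := by
  rintro x (rfl | ⟨ε, i, j, hε, rfl⟩)
  · exact Or.inl (map_zero f)
  have hfε : f ε = ε := by rcases hε with rfl | rfl <;> simp
  rw [map_mul, map_mul, map_zpow₀, map_zpow₀, map_sub, map_one, hfε]
  have hεU1 : ε ∈ U1 := by rcases hε with rfl | rfl; exacts [U1.one_mem, U1.neg_one_mem]
  exact U1.mul_mem (U1.mul_mem hεU1 (U1.zpow_mem hf.1 i)) (U1.zpow_mem hf.2 j)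

noncomputable def substRingHom (x : K) (hx : Transcendental ℚ x) : K →+* K :=
  RatFunc.liftRingHom (aeval x).toRingHom
    (nonZeroDivisors_le_comap_nonZeroDivisors_of_injective _ (transcendental_iff_injective.mp hx))

@[simp]
lemma substRingHom_nrAlpha (x : K) (hx : Transcendental ℚ x) : substRingHom x hx nrAlpha = x := by
  simp [substRingHom, nrAlpha]

lemma ringHom_ext_nrAlpha {f g : K →+* K} (h : f nrAlpha = g nrAlpha) : f = g := by
  refine IsLocalization.ringHom_ext (nonZeroDivisors ℚ[X]) (ringHom_ext' ?_ ?_)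
  · exact Subsingleton.elim _ _
  · simpa [nrAlpha] using h

lemma substRingHom_comp_self {x : K} {hx : Transcendental ℚ x}
    (hxx : substRingHom x hx x = nrAlpha) :
    (substRingHom x hx).comp (substRingHom x hx) = RingHom.id K :=
  ringHom_ext_nrAlpha (by simpa using hxx)

noncomputable def substInvolution (x : K) (hx : Transcendental ℚ x)
    (hxx : substRingHom x hx x = nrAlpha) : RingAut K :=
  RingEquiv.ofRingHom _ _ (substRingHom_comp_self hxx) (substRingHom_comp_self hxx)

@[simp]
lemma substInvolution_apply (x : K) (hx : Transcendental ℚ x)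
    (hxx : substRingHom x hx x = nrAlpha) (y : K) :
    substInvolution x hx hxx y = substRingHom x hx y :=
  rfl

lemma substInvolution_mem_stabilizer {x : K} {hx : Transcendental ℚ x}
    (hxx : substRingHom x hx x = nrAlpha) (hfund : IsFund x) :
    substInvolution x hx hxx ∈ stabilizer (RingAut K) U1 := by
  have hmaps := mapsTo_U1_of_isFund (f := substRingHom x hx) (by simpa using hfund)
  refine mem_stabilizer_set.mpr fun y => ⟨fun hy => ?_, fun hy => hmaps hy⟩
  simpa [← RingHom.comp_apply, substRingHom_comp_self hxx] using hmaps hy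

noncomputable def sigma : RingAut K :=
  substInvolution (1 - nrAlpha) transcendental_one_sub_nrAlpha
    (by rw [map_sub, map_one, substRingHom_nrAlpha, sub_sub_cancel])

noncomputable def tau : RingAut K :=
  substInvolution nrAlpha⁻¹ transcendental_nrAlpha_inv
    (by rw [map_inv₀, substRingHom_nrAlpha, inv_inv])

@[simp]
lemma sigma_nrAlpha : sigma nrAlpha = 1 - nrAlpha :=
  substRingHom_nrAlpha _ transcendental_one_sub_nrAlpha

@[simp]
lemma tau_nrAlpha : tau nrAlpha = nrAlpha⁻¹ :=
  substRingHom_nrAlpha _ transcendental_nrAlpha_inv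

lemma sigma_mem_stabilizer : sigma ∈ stabilizer (RingAut K) U1 :=
  substInvolution_mem_stabilizer _ isFund_one_sub_nrAlpha

lemma tau_mem_stabilizer : tau ∈ stabilizer (RingAut K) U1 :=
  substInvolution_mem_stabilizer _ isFund_nrAlpha_inv

noncomputable def U1Auto.ofMemStabilizer (e : RingAut K) (he : e ∈ stabilizer (RingAut K) U1) :
    U1Auto :=
  have he' : ∀ y, e y ∈ U1 ↔ y ∈ U1 := mem_stabilizer_set.mp he
  { toFun := e
    bijOn := ⟨fun y hy => (he' y).2 hy, e.injective.injOn,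
      fun y hy => ⟨e.symm y, (he' _).1 (by simpa using hy), e.apply_symm_apply y⟩⟩
    map_one := _root_.map_one e
    map_mul := fun p _ q _ => _root_.map_mul e p q
    map_add := fun p _ q _ _ => _root_.map_add e p q
    defined_iff := fun p _ q _ => by rw [← _root_.map_add, he'] }

lemma exists_mem_stabilizer_apply_nrAlpha_eq {p : K}
    (hp : p = nrAlpha ∨ p = 1 - nrAlpha ∨ p = nrAlpha⁻¹ ∨ p = (1 - nrAlpha)⁻¹ ∨
      p = 1 - nrAlpha⁻¹ ∨ p = 1 - (1 - nrAlpha)⁻¹) :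
    ∃ e ∈ stabilizer (RingAut K) U1, e nrAlpha = p := by
  have hσ := sigma_mem_stabilizer
  have hτ := tau_mem_stabilizer
  rcases hp with rfl | rfl | rfl | rfl | rfl | rfl
  · exact ⟨1, one_mem _, rfl⟩
  · exact ⟨sigma, hσ, sigma_nrAlpha⟩
  · exact ⟨tau, hτ, tau_nrAlpha⟩
  · exact ⟨sigma * tau, mul_mem hσ hτ, by simp⟩
  · exact ⟨tau * sigma, mul_mem hτ hσ, by simp⟩
  · exact ⟨sigma * tau * sigma, mul_mem (mul_mem hσ hτ) hσ, by simp⟩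

lemma zpow_mul_pow_eq_pow_toNat {G₀ : Type*} [GroupWithZero G₀] {x : G₀} (hx : x ≠ 0) {i : ℤ}
    {M : ℕ} (h : 0 ≤ i + M) : x ^ i * x ^ M = x ^ (i + M).toNat := by
  rw [← zpow_natCast, ← zpow_natCast, Int.toNat_of_nonneg h, zpow_add₀ hx]

lemma aeval_C_mul_X_pow_mul_one_sub_X_pow {F : Type*} [Field F] [Algebra ℚ F] {x : F}
    (hx₀ : x ≠ 0) (hx₁ : 1 - x ≠ 0) (c : ℚ) {i j : ℤ} {M N : ℕ} (hi : 0 ≤ i + M)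
    (hj : 0 ≤ j + N) :
    aeval x (C c * X ^ (i + M).toNat * (1 - X) ^ (j + N).toNat) =
      algebraMap ℚ F c * x ^ i * (1 - x) ^ j * (x ^ M * (1 - x) ^ N) := by
  simp only [map_mul, map_pow, map_sub, map_one, aeval_C, aeval_X,
    ← zpow_mul_pow_eq_pow_toNat hx₀ hi, ← zpow_mul_pow_eq_pow_toNat hx₁ hj]
  ring

lemma specialize_of_add_eq_one {c d : ℚ} {i j k l : ℤ}
    (h : algebraMap ℚ K c * nrAlpha ^ i * (1 - nrAlpha) ^ j +
      algebraMap ℚ K d * nrAlpha ^ k * (1 - nrAlpha) ^ l = 1)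
    {F : Type*} [Field F] [Algebra ℚ F] {x : F} (hx₀ : x ≠ 0) (hx₁ : 1 - x ≠ 0) :
    algebraMap ℚ F c * x ^ i * (1 - x) ^ j + algebraMap ℚ F d * x ^ k * (1 - x) ^ l = 1 := by
  set M := (-i).toNat + (-k).toNat
  set N := (-j).toNat + (-l).toNat
  have hi : 0 ≤ i + M := by omega
  have hj : 0 ≤ j + N := by omega
  have hk : 0 ≤ k + M := by omega
  have hl : 0 ≤ l + N := by omega
  set Q : ℚ[X] := C c * X ^ (i + M).toNat * (1 - X) ^ (j + N).toNat +
    C d * X ^ (k + M).toNat * (1 - X) ^ (l + N).toNat - X ^ M * (1 - X) ^ N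
  have hQ : Q = 0 := by
    refine transcendental_iff_injective.mp transcendental_nrAlpha ?_
    simp only [Q, map_sub, map_add, map_mul, map_pow, aeval_X, map_one, map_zero,
      aeval_C_mul_X_pow_mul_one_sub_X_pow nrAlpha_ne_zero one_sub_nrAlpha_ne_zero _ hi hj,
      aeval_C_mul_X_pow_mul_one_sub_X_pow nrAlpha_ne_zero one_sub_nrAlpha_ne_zero _ hk hl]
    linear_combination (nrAlpha ^ M * (1 - nrAlpha) ^ N) * h
  have hx := congrArg (aeval x) hQ
  simp only [Q, map_sub, map_add, map_mul, map_pow, aeval_X, map_one, map_zero,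
    aeval_C_mul_X_pow_mul_one_sub_X_pow hx₀ hx₁ _ hi hj,
    aeval_C_mul_X_pow_mul_one_sub_X_pow hx₀ hx₁ _ hk hl] at hx
  have hMN : x ^ M * (1 - x) ^ N ≠ 0 := mul_ne_zero (pow_ne_zero _ hx₀) (pow_ne_zero _ hx₁)
  exact sub_eq_zero.mp <| (mul_eq_zero.mp (by linear_combination hx)).resolve_right hMN

lemma padicValRat_two_mul_two_zpow {c : ℚ} (hc : |c| = 1) (x : ℤ) :
    padicValRat 2 (c * 2 ^ x) = x := by
  have h2 : padicValRat 2 2 = 1 := by exact_mod_cast padicValRat.self (p := 2) one_lt_two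
  rcases abs_eq zero_le_one |>.mp hc with rfl | rfl <;> simp [h2]

lemma two_zpow_injective : Function.Injective fun n : ℤ => (2 : ℚ) ^ n :=
  zpow_right_injective₀ two_pos (by norm_num)

lemma eq_of_add_two_zpow_eq_one {c d : ℚ} (hc : |c| = 1) (hd : |d| = 1) {x y : ℤ}
    (h : c * 2 ^ x + d * 2 ^ y = 1) :
    (c = 1 ∧ d = 1 ∧ x = -1 ∧ y = -1) ∨ (c = 1 ∧ d = -1 ∧ x = 1 ∧ y = 0) ∨
      (c = -1 ∧ d = 1 ∧ x = 0 ∧ y = 1) := by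
  wlog hxy : x ≤ y generalizing c d x y
  · have := this hd hc (x := y) (y := x) (by linear_combination h) (by omega)
    tauto
  have hc' := abs_eq zero_le_one |>.mp hc
  have hd' := abs_eq zero_le_one |>.mp hd
  have h2x : (0 : ℚ) < 2 ^ x := zpow_pos two_pos x
  have h2y : (0 : ℚ) < 2 ^ y := zpow_pos two_pos y
  rcases hxy.eq_or_lt with rfl | hxy
  · have hcd : (c + d) * 2 ^ x = 1 := by linear_combination h
    have hpos : 0 < c + d := pos_of_mul_pos_left (hcd ▸ one_pos) h2y.le
    obtain ⟨rfl, rfl⟩ : c = 1 ∧ d = 1 := by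
      rcases hc' with rfl | rfl <;> rcases hd' with rfl | rfl <;>
        first | exact ⟨rfl, rfl⟩ | norm_num at hpos
    have : x + 1 = 0 := two_zpow_injective <| show (2 : ℚ) ^ (x + 1) = 2 ^ (0 : ℤ) by
      rw [zpow_add_one₀ two_ne_zero, zpow_zero]; linear_combination hcd
    exact Or.inl ⟨rfl, rfl, by omega, by omega⟩
  · have hx : x = 0 := by
      have hval := padicValRat.add_eq_min (p := 2) (by rw [h]; exact one_ne_zero)
        (mul_ne_zero (by rintro rfl; simp at hc) h2x.ne')
        (mul_ne_zero (by rintro rfl; simp at hd) h2y.ne')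
        (by rw [padicValRat_two_mul_two_zpow hc, padicValRat_two_mul_two_zpow hd]; exact hxy.ne)
      rwa [h, padicValRat.one, padicValRat_two_mul_two_zpow hc, padicValRat_two_mul_two_zpow hd,
        min_eq_left hxy.le, eq_comm] at hval
    subst hx
    rw [zpow_zero] at h
    rcases hc' with rfl | rfl <;> rcases hd' with rfl | rfl
    · linarith
    · linarith
    · have : y = 1 := two_zpow_injective <| show (2 : ℚ) ^ y = 2 ^ (1 : ℤ) by
        linear_combination h
      exact Or.inr (Or.inr ⟨rfl, rfl, rfl, this⟩)
    · linarith

lemma exists_rat_sign {ε : K} (hε : ε = 1 ∨ ε = -1) :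
    ∃ c : ℚ, |c| = 1 ∧ algebraMap ℚ K c = ε := by
  rcases hε with rfl | rfl
  exacts [⟨1, by simp, map_one _⟩, ⟨-1, by simp, by simp⟩]

lemma sign_exponents_of_add_eq_one {c d : ℚ} (hc : |c| = 1) (hd : |d| = 1) {i j k l : ℤ}
    (h : ∀ x : ℚ, x ≠ 0 → 1 - x ≠ 0 → c * x ^ i * (1 - x) ^ j + d * x ^ k * (1 - x) ^ l = 1) :
    (c = 1 ∧ i = 1 ∧ j = 0) ∨ (c = 1 ∧ i = 0 ∧ j = 1) ∨ (c = 1 ∧ i = -1 ∧ j = 0) ∨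
      (c = 1 ∧ i = 0 ∧ j = -1) ∨ (c = -1 ∧ i = -1 ∧ j = 1) ∨ (c = -1 ∧ i = 1 ∧ j = -1) := by
  have exponents {c d : ℚ} {x y : ℤ} (hc : |c| = 1) (hd : |d| = 1)
      (h : c * 2 ^ x + d * 2 ^ y = 1) : (x = -1 ∧ y = -1) ∨ (x = 1 ∧ y = 0) ∨ (x = 0 ∧ y = 1) := by
    rcases eq_of_add_two_zpow_eq_one hc hd h with ⟨-, -, h⟩ | ⟨-, -, h⟩ | ⟨-, -, h⟩ <;> omega
  have h₂ := h 2 (by norm_num) (by norm_num)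
  have hneg := h (-1) (by norm_num) (by norm_num)
  have hhalf := h 2⁻¹ (by norm_num) (by norm_num)
  norm_num at h₂ hneg
  rw [show (1 : ℚ) - 2⁻¹ = 2⁻¹ by norm_num] at hhalf
  simp only [inv_zpow'] at hhalf
  have hik := exponents (c := c * (-1) ^ j) (d := d * (-1) ^ l) (x := i) (y := k)
    (by simp [hc]) (by simp [hd]) (by linear_combination h₂)
  have hjl := exponents (c := c * (-1) ^ i) (d := d * (-1) ^ k) (x := j) (y := l)
    (by simp [hc]) (by simp [hd]) (by linear_combination hneg)
  have hsum := eq_of_add_two_zpow_eq_one (x := -i + -j) (y := -k + -l) hc hd <| by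
    rw [zpow_add₀ two_ne_zero, zpow_add₀ two_ne_zero]
    linear_combination hhalf
  rcases hsum with ⟨rfl, -, hij, hkl⟩ | ⟨rfl, -, hij, hkl⟩ | ⟨rfl, -, hij, hkl⟩ <;>
    norm_num <;> omega

lemma eq_of_isFund {p : K} (hp : IsFund p) (hp₀ : p ≠ 0) (hp₁ : p ≠ 1) :
    p = nrAlpha ∨ p = 1 - nrAlpha ∨ p = nrAlpha⁻¹ ∨ p = (1 - nrAlpha)⁻¹ ∨
      p = 1 - nrAlpha⁻¹ ∨ p = 1 - (1 - nrAlpha)⁻¹ := by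
  obtain ⟨ε, i, j, hε, rfl⟩ := hp.1.resolve_left hp₀
  obtain ⟨ε', k, l, hε', hq⟩ := hp.2.resolve_left (sub_ne_zero.mpr hp₁.symm)
  obtain ⟨c, hc, rfl⟩ := exists_rat_sign hε
  obtain ⟨d, hd, rfl⟩ := exists_rat_sign hε'
  have hexp := sign_exponents_of_add_eq_one hc hd fun x hx₀ hx₁ =>
    specialize_of_add_eq_one (by rw [← hq]; ring) hx₀ hx₁
  have hα := nrAlpha_ne_zero
  have h1α := one_sub_nrAlpha_ne_zero
  rcases hexp with ⟨rfl, rfl, rfl⟩ | ⟨rfl, rfl, rfl⟩ | ⟨rfl, rfl, rfl⟩ | ⟨rfl, rfl, rfl⟩ |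
    ⟨rfl, rfl, rfl⟩ | ⟨rfl, rfl, rfl⟩
  · exact .inl (by simp)
  · exact .inr <| .inl (by simp)
  · exact .inr <| .inr <| .inl (by simp)
  · exact .inr <| .inr <| .inr <| .inl (by simp)
  · exact .inr <| .inr <| .inr <| .inr <| .inl (by simp; field_simp; ring)
  · exact .inr <| .inr <| .inr <| .inr <| .inr (by simp; field_simp; ring)

/-- For any two fundamental elements `p, q ∉ {0, 1}` of `𝕌₁`, there is an
automorphism of `𝕌₁` taking `p` to `q`. -/
theorem exists_automorphism_mapping_fundamental_elements
    (p q : RatFunc ℚ) (hp : IsFund p) (hq : IsFund q)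
    (hp0 : p ≠ 0) (hp1 : p ≠ 1) (hq0 : q ≠ 0) (hq1 : q ≠ 1) :
    ∃ ψ : U1Auto, ψ.toFun p = q := by
  obtain ⟨e₁, he₁, rfl⟩ := exists_mem_stabilizer_apply_nrAlpha_eq (eq_of_isFund hp hp0 hp1)
  obtain ⟨e₂, he₂, rfl⟩ := exists_mem_stabilizer_apply_nrAlpha_eq (eq_of_isFund hq hq0 hq1)
  exact ⟨.ofMemStabilizer (e₂ * e₁⁻¹) (mul_mem he₂ (inv_mem he₁)),
    congrArg e₂ (e₁.symm_apply_apply nrAlpha)⟩
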